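/- arXiv:2101.08141 — 5 statements merged into one kernel-verified Lean document; each statement's English description precedes it below -/
import Mathlib

section
/- Let ḡ = g'/g where g is the standard Gaussian CDF. For any Δ ≥ 1 and x ∈ ℝ with |x| ≤ Δ, one has |ḡ(x)| ≤ 2Δ, |ḡ'(x)| ≤ 3Δ·|ḡ(x)|, and |ḡ''(x)| ≤ 15Δ²·|ḡ(x)|. -/
open Real MeasureTheory Filter Set

/-- The standard Gaussian CDF. -/
noncomputable def gcdf (x : ℝ) : ℝ :=
  ∫ t in Set.Iio x, (1 / Real.sqrt (2 * Real.pi)) * Real.exp (-t ^ 2 / 2)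

/-- The standard Gaussian density. -/
noncomputable def gpdf (x : ℝ) : ℝ := (1 / Real.sqrt (2 * Real.pi)) * Real.exp (-x ^ 2 / 2)

/-- The inverse Mills-type ratio `ḡ = g'/g`. -/
noncomputable def gbar (x : ℝ) : ℝ := gpdf x / gcdf x

lemma gpdf_pos (x : ℝ) : 0 < gpdf x := by
  have h : (0:ℝ) < Real.sqrt (2 * Real.pi) := Real.sqrt_pos.2 (by positivity)
  exact mul_pos (by positivity) (Real.exp_pos _)

lemma continuous_gpdf : Continuous gpdf := by
  unfold gpdf; fun_prop

lemma integrable_gpdf : Integrable gpdf := by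
  have h := (integrable_exp_neg_mul_sq (show (0:ℝ) < 1/2 by norm_num)).const_mul
    (1 / Real.sqrt (2 * Real.pi))
  show Integrable (fun x : ℝ => (1 / Real.sqrt (2 * Real.pi)) * Real.exp (-x ^ 2 / 2))
  simpa only [show ∀ x : ℝ, -(1/2 : ℝ) * x ^ 2 = -x ^ 2 / 2 from fun x => by ring] using h

lemma gcdf_eq_Iic (x : ℝ) : gcdf x = ∫ t in Set.Iic x, gpdf t :=
  (MeasureTheory.integral_Iic_eq_integral_Iio).symm

lemma gcdf_eq (x : ℝ) : gcdf x = gcdf 0 + ∫ t in (0:ℝ)..x, gpdf t := by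
  have h := intervalIntegral.integral_Iic_sub_Iic
    (integrable_gpdf.integrableOn (s := Set.Iic (0:ℝ)))
    (integrable_gpdf.integrableOn (s := Set.Iic x))
  rw [gcdf_eq_Iic, gcdf_eq_Iic]
  linarith [h]

lemma hasDerivAt_gcdf (x : ℝ) : HasDerivAt gcdf (gpdf x) x := by
  have h : gcdf = fun y => gcdf 0 + ∫ t in (0:ℝ)..y, gpdf t := funext gcdf_eq
  rw [h]
  exact ((continuous_gpdf.integral_hasStrictDerivAt 0 x).hasDerivAt).const_add (gcdf 0)

lemma gcdf_pos (x : ℝ) : 0 < gcdf x := by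
  have h : gcdf x = ∫ t in Set.Iio x, gpdf t := rfl
  rw [h, MeasureTheory.setIntegral_pos_iff_support_of_nonneg_ae
    (Filter.Eventually.of_forall fun t => (gpdf_pos t).le) integrable_gpdf.integrableOn]
  have hs : Function.support gpdf = Set.univ := Set.eq_univ_of_forall fun t => (gpdf_pos t).ne'
  simp [hs, Real.volume_Iio]

lemma hasDerivAt_gpdf (x : ℝ) : HasDerivAt gpdf (-x * gpdf x) x := by
  have h : HasDerivAt (fun t : ℝ => -t ^ 2 / 2) (-x) x := by
    have := ((hasDerivAt_pow 2 x).neg).div_const 2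
    refine HasDerivAt.congr_deriv this ?_
    push_cast; ring
  have h2 := (h.exp).const_mul (1 / Real.sqrt (2 * Real.pi))
  refine HasDerivAt.congr_deriv h2 ?_
  simp only [gpdf]; ring

lemma tendsto_gpdf_atBot : Filter.Tendsto gpdf Filter.atBot (nhds 0) := by
  have h1 : Filter.Tendsto (fun x : ℝ => -x ^ 2 / 2) Filter.atBot Filter.atBot := by
    apply Filter.tendsto_atBot_mono' Filter.atBot (f₁ := fun x : ℝ => x) _ Filter.tendsto_id
    filter_upwards [Filter.eventually_le_atBot (-2:ℝ)] with y hy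
    nlinarith
  have h4 := Real.tendsto_exp_atBot.comp h1
  have h5 := h4.const_mul (1 / Real.sqrt (2 * Real.pi))
  rw [mul_zero] at h5
  exact h5

lemma tendsto_gcdf_atBot : Filter.Tendsto gcdf Filter.atBot (nhds 0) := by
  have h1 : Filter.Tendsto (fun a : ℝ => ∫ t in a..(0:ℝ), gpdf t) Filter.atBot
      (nhds (gcdf 0)) := by
    have := MeasureTheory.intervalIntegral_tendsto_integral_Iic (μ := volume) (f := gpdf)
      (0:ℝ) integrable_gpdf.integrableOn tendsto_id
    rw [← gcdf_eq_Iic] at this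
    exact this
  have h2 : gcdf = fun a => gcdf 0 - ∫ t in a..(0:ℝ), gpdf t := by
    funext a
    rw [gcdf_eq a, intervalIntegral.integral_symm]
    ring
  rw [h2]
  simpa using (tendsto_const_nhds (x := gcdf 0)).sub h1

noncomputable def gs (x : ℝ) : ℝ := Real.sqrt (x ^ 2 + 4)
noncomputable def gu (x : ℝ) : ℝ := (x + gs x) / 2
noncomputable def gH (x : ℝ) : ℝ := gcdf x - gu x * gpdf x

lemma gs_pos (x : ℝ) : 0 < gs x := Real.sqrt_pos.2 (by positivity)

lemma gs_sq (x : ℝ) : gs x ^ 2 = x ^ 2 + 4 := Real.sq_sqrt (by positivity)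

lemma abs_lt_gs (x : ℝ) : |x| < gs x := by
  have h : Real.sqrt (x ^ 2) < Real.sqrt (x ^ 2 + 4) :=
    Real.sqrt_lt_sqrt (sq_nonneg x) (by linarith)
  rwa [Real.sqrt_sq_eq_abs] at h

lemma gs_le (x : ℝ) : gs x ≤ |x| + 2 := by
  have h : Real.sqrt (x ^ 2 + 4) ≤ Real.sqrt ((|x| + 2) ^ 2) := by
    apply Real.sqrt_le_sqrt
    have := abs_nonneg x
    nlinarith [sq_abs x]
  rwa [Real.sqrt_sq (by positivity)] at h

lemma gu_pos (x : ℝ) : 0 < gu x := by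
  have := abs_lt_gs x
  have := neg_abs_le x
  unfold gu; linarith

lemma hasDerivAt_gs (x : ℝ) : HasDerivAt gs (x / gs x) x := by
  have h1 : HasDerivAt (fun t : ℝ => t ^ 2 + 4) (2 * x) x := by
    simpa using (hasDerivAt_pow 2 x).add_const 4
  have h2 := (Real.hasDerivAt_sqrt (show x ^ 2 + 4 ≠ 0 by positivity)).comp x h1
  have h3 : gs = fun t : ℝ => Real.sqrt (t ^ 2 + 4) := rfl
  rw [h3]
  refine HasDerivAt.congr_deriv h2 ?_
  have := gs_pos x
  field_simp [gs]

lemma hasDerivAt_gu (x : ℝ) : HasDerivAt gu ((1 + x / gs x) / 2) x :=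
  ((hasDerivAt_id x).add (hasDerivAt_gs x)).div_const 2

lemma hasDerivAt_gH (x : ℝ) :
    HasDerivAt gH (gpdf x - ((1 + x / gs x) / 2 * gpdf x + gu x * (-x * gpdf x))) x :=
  (hasDerivAt_gcdf x).sub ((hasDerivAt_gu x).mul (hasDerivAt_gpdf x))

lemma key_ineq (x : ℝ) : 0 ≤ gs x * (1 + x ^ 2) + x * (x ^ 2 + 3) := by
  have hA2 : (gs x * (1 + x ^ 2)) ^ 2 = (x * (x ^ 2 + 3)) ^ 2 + 4 := by
    have h := gs_sq x
    linear_combination (1 + x ^ 2) ^ 2 * h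
  have hA : 0 < gs x * (1 + x ^ 2) := mul_pos (gs_pos x) (by positivity)
  nlinarith [hA, hA2, sq_nonneg (gs x * (1 + x ^ 2) + x * (x ^ 2 + 3))]

lemma deriv_gH_nonneg (x : ℝ) : 0 ≤ deriv gH x := by
  rw [(hasDerivAt_gH x).deriv]
  have hs := gs_pos x
  have hq := gs_sq x
  have hk := key_ineq x
  have hp := (gpdf_pos x).le
  have hne : gs x ≠ 0 := (gs_pos x).ne'
  have h : 1 - (1 + x / gs x) / 2 + x * gu x =
      (gs x * (1 + x ^ 2) + x * (x ^ 2 + 3)) / (2 * gs x) := by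
    unfold gu
    field_simp
    linear_combination x * hq
  have h2 : 0 ≤ 1 - (1 + x / gs x) / 2 + x * gu x := by
    rw [h]; positivity
  calc (0:ℝ) = gpdf x * 0 := by ring
  _ ≤ gpdf x * (1 - (1 + x / gs x) / 2 + x * gu x) := by
      exact mul_le_mul_of_nonneg_left h2 hp
  _ = gpdf x - ((1 + x / gs x) / 2 * gpdf x + gu x * (-x * gpdf x)) := by ring

lemma monotone_gH : Monotone gH :=
  monotone_of_deriv_nonneg (fun x => (hasDerivAt_gH x).differentiableAt) deriv_gH_nonneg

lemma gu_le_one {x : ℝ} (hx : x ≤ 0) : gu x ≤ 1 := by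
  have h := gs_le x
  rw [abs_of_nonpos hx] at h
  unfold gu; linarith

lemma tendsto_gH_atBot : Filter.Tendsto gH Filter.atBot (nhds 0) := by
  have h1 : Filter.Tendsto (fun x => gu x * gpdf x) Filter.atBot (nhds 0) := by
    apply squeeze_zero_norm' (a := gpdf) _ tendsto_gpdf_atBot
    filter_upwards [Filter.eventually_le_atBot (0:ℝ)] with x hx
    rw [Real.norm_eq_abs, abs_of_pos (mul_pos (gu_pos x) (gpdf_pos x))]
    calc gu x * gpdf x ≤ 1 * gpdf x :=
      mul_le_mul_of_nonneg_right (gu_le_one hx) (gpdf_pos x).le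
    _ = gpdf x := one_mul _
  have := tendsto_gcdf_atBot.sub h1
  show Tendsto (fun x => gcdf x - gu x * gpdf x) atBot (nhds 0)
  simpa using this

lemma gH_nonneg (x : ℝ) : 0 ≤ gH x := by
  refine le_of_tendsto tendsto_gH_atBot ?_
  filter_upwards [Filter.eventually_le_atBot x] with y hy
  exact monotone_gH hy

lemma gbar_pos (x : ℝ) : 0 < gbar x := div_pos (gpdf_pos x) (gcdf_pos x)

lemma gbar_le (x : ℝ) : gbar x ≤ 1 + |x| := by
  have hH : gu x * gpdf x ≤ gcdf x := by
    have := gH_nonneg x; unfold gH at this; linarith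
  have hu := gu_pos x
  have hp := gpdf_pos x
  have h1 : gbar x ≤ gpdf x / (gu x * gpdf x) := by
    unfold gbar
    exact div_le_div_of_nonneg_left hp.le (mul_pos hu hp) hH
  have h2 : gpdf x / (gu x * gpdf x) = 1 / gu x := by
    rw [div_mul_eq_div_div_swap, div_self hp.ne']
  have h3 : 1 / gu x = (gs x - x) / 2 := by
    have hq := gs_sq x
    have hpos : (0:ℝ) < x + gs x := by unfold gu at hu; linarith
    rw [div_eq_div_iff hu.ne' two_ne_zero]
    unfold gu
    linear_combination (-1/2 : ℝ) * hq
  have h4 : (gs x - x) / 2 ≤ 1 + |x| := by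
    have := gs_le x
    have := neg_abs_le x
    linarith
  have h5 : gbar x ≤ 1 / gu x := h2 ▸ h1
  rw [h3] at h5
  have := gs_le x
  have := neg_abs_le x
  linarith

lemma hasDerivAt_gbar (x : ℝ) : HasDerivAt gbar (-(gbar x * (x + gbar x))) x := by
  have h := (hasDerivAt_gpdf x).div (hasDerivAt_gcdf x) (gcdf_pos x).ne'
  have hc := (gcdf_pos x).ne'
  have h2 : HasDerivAt (fun y => gpdf y / gcdf y) (-(gbar x * (x + gbar x))) x := by
    refine HasDerivAt.congr_deriv h ?_
    unfold gbar
    field_simp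
    ring
  exact h2

lemma deriv_gbar_eq : deriv gbar = fun x => -(gbar x * (x + gbar x)) :=
  funext fun x => (hasDerivAt_gbar x).deriv

lemma hasDerivAt_deriv_gbar (x : ℝ) :
    HasDerivAt (deriv gbar) (gbar x * ((x + gbar x) * (x + 2 * gbar x) - 1)) x := by
  rw [deriv_gbar_eq]
  have h := (((hasDerivAt_gbar x).mul ((hasDerivAt_id x).add (hasDerivAt_gbar x))).neg)
  refine HasDerivAt.congr_deriv h ?_
  simp only [Pi.add_apply, id_eq]
  ring

/-- For `Δ ≥ 1` and `|x| ≤ Δ`: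
`|ḡ(x)| ≤ 2Δ`, `|ḡ'(x)| ≤ 3Δ|ḡ(x)|`, `|ḡ''(x)| ≤ 15Δ²|ḡ(x)|`. -/
theorem gbar_bounds (Δ : ℝ) (hΔ : 1 ≤ Δ) (x : ℝ) (hx : |x| ≤ Δ) :
    |gbar x| ≤ 2 * Δ ∧ |deriv gbar x| ≤ 3 * Δ * |gbar x| ∧
      |deriv (deriv gbar) x| ≤ 15 * Δ ^ 2 * |gbar x| := by
  have hG : 0 < gbar x := gbar_pos x
  have hG1 : gbar x ≤ 1 + Δ := (gbar_le x).trans (by linarith)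
  obtain ⟨hx1, hx2⟩ := abs_le.1 hx
  have habsG : |gbar x| = gbar x := abs_of_pos hG
  refine ⟨?_, ?_, ?_⟩
  · rw [habsG]; linarith
  · rw [(hasDerivAt_gbar x).deriv, abs_neg, abs_mul, habsG]
    have h1 : |x + gbar x| ≤ 3 * Δ := by
      rw [abs_le]
      constructor <;> nlinarith
    calc gbar x * |x + gbar x| ≤ gbar x * (3 * Δ) :=
      mul_le_mul_of_nonneg_left h1 hG.le
    _ = 3 * Δ * gbar x := by ring
  · rw [(hasDerivAt_deriv_gbar x).deriv, abs_mul, habsG]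
    have h1 : |(x + gbar x) * (x + 2 * gbar x) - 1| ≤ 15 * Δ ^ 2 := by
      rw [abs_le]
      constructor
      · nlinarith [sq_nonneg (4 * gbar x + 3 * x)]
      · nlinarith [sq_nonneg (Δ - x), sq_nonneg (Δ + x), sq_nonneg (gbar x)]
    calc gbar x * |(x + gbar x) * (x + 2 * gbar x) - 1| ≤ gbar x * (15 * Δ ^ 2) :=
      mul_le_mul_of_nonneg_left h1 hG.le
    _ = 15 * Δ ^ 2 * gbar x := by ring
end

section
/- Let A and B be diagonal k×k real matrices, A = diag(a_1,...,a_k), B = diag(b_1,...,b_k), with a_1 ≥ ... ≥ a_k ≥ 0 and b_1 ≥ ... ≥ b_k ≥ 0, and let H be an arbitrary k×k real matrix. Then ‖AHB‖_F² + ‖BHA‖_F² ≤ ‖HAB‖_F² + ‖ABH‖_F², where ‖·‖_F is the Frobenius norm. In particular ‖AHB‖_F ≤ ‖HAB‖_F + ‖ABH‖_F. -/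
open Matrix

/-- Squared Frobenius norm of a real matrix. -/
noncomputable def frobSq {k : ℕ} (M : Matrix (Fin k) (Fin k) ℝ) : ℝ :=
  ∑ i, ∑ j, (M i j) ^ 2

lemma frobSq_nonneg {k : ℕ} (M : Matrix (Fin k) (Fin k) ℝ) : 0 ≤ frobSq M := by
  unfold frobSq
  positivity

lemma sqrt_add_le' (x y : ℝ) (hx : 0 ≤ x) (hy : 0 ≤ y) :
    Real.sqrt (x + y) ≤ Real.sqrt x + Real.sqrt y := by
  have h : x + y ≤ (Real.sqrt x + Real.sqrt y) ^ 2 := by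
    have hxx := Real.sq_sqrt hx
    have hyy := Real.sq_sqrt hy
    nlinarith [mul_nonneg (Real.sqrt_nonneg x) (Real.sqrt_nonneg y)]
  calc Real.sqrt (x + y) ≤ Real.sqrt ((Real.sqrt x + Real.sqrt y) ^ 2) :=
        Real.sqrt_le_sqrt h
    _ = Real.sqrt x + Real.sqrt y := by
        rw [Real.sqrt_sq (by positivity)]

/-- For diagonal `A, B` with nonnegative entries sorted in the same nonincreasing order
and arbitrary `H`: `‖AHB‖_F² + ‖BHA‖_F² ≤ ‖HAB‖_F² + ‖ABH‖_F²`, and in particular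
`‖AHB‖_F ≤ ‖HAB‖_F + ‖ABH‖_F`. -/
theorem diagonal_rearrangement_frobenius {k : ℕ} (a b : Fin k → ℝ)
    (ha0 : ∀ i, 0 ≤ a i) (hb0 : ∀ i, 0 ≤ b i)
    (ha : ∀ i j : Fin k, i ≤ j → a j ≤ a i) (hb : ∀ i j : Fin k, i ≤ j → b j ≤ b i)
    (H : Matrix (Fin k) (Fin k) ℝ) :
    (frobSq (diagonal a * H * diagonal b) + frobSq (diagonal b * H * diagonal a) ≤
        frobSq (H * diagonal a * diagonal b) + frobSq (diagonal a * diagonal b * H)) ∧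
      Real.sqrt (frobSq (diagonal a * H * diagonal b)) ≤
        Real.sqrt (frobSq (H * diagonal a * diagonal b)) +
          Real.sqrt (frobSq (diagonal a * diagonal b * H)) := by
  have key : ∀ i j : Fin k,
      (a i * H i j * b j) ^ 2 + (b i * H i j * a j) ^ 2 ≤
        (H i j * a j * b j) ^ 2 + (a i * b i * H i j) ^ 2 := by
    intro i j
    rcases le_total i j with h | h
    · have h1 : a j ≤ a i := ha i j h
      have h2 : b j ≤ b i := hb i j h
      nlinarith [sq_nonneg (H i j), ha0 j, hb0 j,
        mul_nonneg (mul_nonneg (sq_nonneg (H i j))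
          (sub_nonneg.mpr (mul_self_le_mul_self (ha0 j) h1)))
          (sub_nonneg.mpr (mul_self_le_mul_self (hb0 j) h2))]
    · have h1 : a i ≤ a j := ha j i h
      have h2 : b i ≤ b j := hb j i h
      nlinarith [sq_nonneg (H i j), ha0 i, hb0 i,
        mul_nonneg (mul_nonneg (sq_nonneg (H i j))
          (sub_nonneg.mpr (mul_self_le_mul_self (ha0 i) h1)))
          (sub_nonneg.mpr (mul_self_le_mul_self (hb0 i) h2))]
  have main : frobSq (diagonal a * H * diagonal b) + frobSq (diagonal b * H * diagonal a) ≤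
      frobSq (H * diagonal a * diagonal b) + frobSq (diagonal a * diagonal b * H) := by
    unfold frobSq
    rw [← Finset.sum_add_distrib, ← Finset.sum_add_distrib]
    apply Finset.sum_le_sum
    intro i _
    rw [← Finset.sum_add_distrib, ← Finset.sum_add_distrib]
    apply Finset.sum_le_sum
    intro j _
    simp only [Matrix.diagonal_mul_diagonal, Matrix.diagonal_mul, Matrix.mul_diagonal,
      Pi.mul_apply]
    nlinarith [key i j]
  refine ⟨main, ?_⟩
  have h1 : frobSq (diagonal a * H * diagonal b) ≤
      frobSq (H * diagonal a * diagonal b) + frobSq (diagonal a * diagonal b * H) := by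
    have := frobSq_nonneg (diagonal b * H * diagonal a)
    linarith
  calc Real.sqrt (frobSq (diagonal a * H * diagonal b))
      ≤ Real.sqrt (frobSq (H * diagonal a * diagonal b) + frobSq (diagonal a * diagonal b * H)) :=
        Real.sqrt_le_sqrt h1
    _ ≤ _ := sqrt_add_le' _ _ (frobSq_nonneg _) (frobSq_nonneg _)
end

section
/- Let X ∈ Sym_k(ℝ), H₁, H₂, H₃ ∈ M_k(ℝ), and let u₁, u₂, u₃ ≥ 0 satisfy u₁ + u₂ + u₃ = 1 with u₁ ≤ 1/2 and u₃ ≤ 1/2. Then |Tr(e^{-u₁X²} H₁ e^{-u₂X²} H₂ e^{-u₃X²} H₃)| ≤ (‖H₁e^{-X²/2}‖_F + ‖e^{-X²/2}H₁‖_F)·(‖H₂e^{-X²/2}‖_F + ‖e^{-X²/2}H₂‖_F)·‖H₃‖. -/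
open Matrix

/-- The ℓ²→ℓ² operator norm of a real matrix. -/
noncomputable def opNorm {k : ℕ} (M : Matrix (Fin k) (Fin k) ℝ) : ℝ :=
  ‖Matrix.toEuclideanCLM (𝕜 := ℝ) M‖

/-- Frobenius norm of a real matrix. -/
noncomputable def frobNorm {k : ℕ} (M : Matrix (Fin k) (Fin k) ℝ) : ℝ :=
  Real.sqrt (∑ i, ∑ j, (M i j) ^ 2)

/-- Matrix exponential. -/
noncomputable def mexp {k : ℕ} (M : Matrix (Fin k) (Fin k) ℝ) : Matrix (Fin k) (Fin k) ℝ :=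
  NormedSpace.exp M

set_option maxHeartbeats 1000000
set_option synthInstance.maxHeartbeats 400000

namespace TraceAux

open scoped Matrix.Norms.L2Operator

variable {k : ℕ}

lemma frobNorm_nonneg (M : Matrix (Fin k) (Fin k) ℝ) : 0 ≤ frobNorm M :=
  Real.sqrt_nonneg _

lemma opNorm_nonneg (M : Matrix (Fin k) (Fin k) ℝ) : 0 ≤ opNorm M :=
  norm_nonneg _

lemma sum_pair (f : Fin k → Fin k → ℝ) :
    (∑ p : Fin k × Fin k, f p.1 p.2) = ∑ i, ∑ j, f i j :=
  Fintype.sum_prod_type _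

lemma euclid_norm_eq {ι : Type*} [Fintype ι] (w : ι → ℝ) :
    ‖(WithLp.equiv 2 (ι → ℝ)).symm w‖ = Real.sqrt (∑ i, w i ^ 2) := by
  rw [EuclideanSpace.norm_eq]
  congr 1
  refine Finset.sum_congr rfl fun i _ => ?_
  simp [Real.norm_eq_abs, sq_abs]

/-- Minkowski-type bound. -/
lemma sqrt_sum_sq_le {ι : Type*} [Fintype ι] (f g h : ι → ℝ)
    (hpt : ∀ i, |f i| ≤ |g i| + |h i|) :
    Real.sqrt (∑ i, f i ^ 2) ≤ Real.sqrt (∑ i, g i ^ 2) + Real.sqrt (∑ i, h i ^ 2) := by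
  have step1 : Real.sqrt (∑ i, f i ^ 2) ≤ Real.sqrt (∑ i, (|g i| + |h i|) ^ 2) := by
    apply Real.sqrt_le_sqrt
    refine Finset.sum_le_sum fun i _ => ?_
    have h1 := hpt i
    nlinarith [abs_nonneg (f i), sq_abs (f i)]
  have step2 : Real.sqrt (∑ i, (|g i| + |h i|) ^ 2)
      ≤ Real.sqrt (∑ i, g i ^ 2) + Real.sqrt (∑ i, h i ^ 2) := by
    have e1 : Real.sqrt (∑ i, (|g i| + |h i|) ^ 2)
        = ‖(WithLp.equiv 2 (ι → ℝ)).symm (fun i => |g i|)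
            + (WithLp.equiv 2 (ι → ℝ)).symm (fun i => |h i|)‖ := by
      rw [show (WithLp.equiv 2 (ι → ℝ)).symm (fun i => |g i|)
            + (WithLp.equiv 2 (ι → ℝ)).symm (fun i => |h i|)
          = (WithLp.equiv 2 (ι → ℝ)).symm ((fun i => |g i|) + fun i => |h i|) from rfl,
        euclid_norm_eq]
      simp
    have e2 : Real.sqrt (∑ i, g i ^ 2)
        = ‖(WithLp.equiv 2 (ι → ℝ)).symm (fun i => |g i|)‖ := by
      rw [euclid_norm_eq]; simp [sq_abs]
    have e3 : Real.sqrt (∑ i, h i ^ 2)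
        = ‖(WithLp.equiv 2 (ι → ℝ)).symm (fun i => |h i|)‖ := by
      rw [euclid_norm_eq]; simp [sq_abs]
    rw [e1, e2, e3]
    exact norm_add_le _ _
  exact step1.trans step2

lemma frobNorm_eq_prod_sum (M : Matrix (Fin k) (Fin k) ℝ) :
    frobNorm M = Real.sqrt (∑ p : Fin k × Fin k, M p.1 p.2 ^ 2) := by
  rw [frobNorm]
  exact congrArg Real.sqrt (sum_pair fun i j => M i j ^ 2).symm

/-- Cauchy–Schwarz for the trace of a product. -/
lemma abs_trace_mul_le (M Y : Matrix (Fin k) (Fin k) ℝ) :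
    |Matrix.trace (M * Y)| ≤ frobNorm M * frobNorm Y := by
  have htr : Matrix.trace (M * Y) = ∑ p : Fin k × Fin k, M p.1 p.2 * Y p.2 p.1 := by
    rw [Matrix.trace]
    simp only [Matrix.diag, Matrix.mul_apply]
    exact (sum_pair fun i j => M i j * Y j i).symm
  have hcs := Finset.sum_mul_sq_le_sq_mul_sq Finset.univ
      (fun p : Fin k × Fin k => M p.1 p.2) (fun p : Fin k × Fin k => Y p.2 p.1)
  have h1 : |Matrix.trace (M * Y)|
      = Real.sqrt ((∑ p : Fin k × Fin k, M p.1 p.2 * Y p.2 p.1) ^ 2) := by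
    rw [htr, Real.sqrt_sq_eq_abs]
  have h2 : frobNorm Y = Real.sqrt (∑ p : Fin k × Fin k, Y p.2 p.1 ^ 2) := by
    rw [frobNorm, sum_pair fun a b => Y b a ^ 2]
    exact congrArg Real.sqrt Finset.sum_comm
  rw [h1, frobNorm_eq_prod_sum, h2]
  calc Real.sqrt ((∑ p : Fin k × Fin k, M p.1 p.2 * Y p.2 p.1) ^ 2)
      ≤ Real.sqrt ((∑ p : Fin k × Fin k, M p.1 p.2 ^ 2)
          * ∑ p : Fin k × Fin k, Y p.2 p.1 ^ 2) := Real.sqrt_le_sqrt hcs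
    _ = Real.sqrt (∑ p : Fin k × Fin k, M p.1 p.2 ^ 2)
          * Real.sqrt (∑ p : Fin k × Fin k, Y p.2 p.1 ^ 2) :=
        Real.sqrt_mul (by positivity) _

lemma sum_sq_mulVec_le (M : Matrix (Fin k) (Fin k) ℝ) (v : Fin k → ℝ) :
    ∑ j, (M *ᵥ v) j ^ 2 ≤ opNorm M ^ 2 * ∑ j, v j ^ 2 := by
  have h := (Matrix.toEuclideanCLM (𝕜 := ℝ) M).le_opNorm ((WithLp.equiv 2 (Fin k → ℝ)).symm v)
  rw [show Matrix.toEuclideanCLM (𝕜 := ℝ) M ((WithLp.equiv 2 (Fin k → ℝ)).symm v)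
      = (WithLp.equiv 2 (Fin k → ℝ)).symm (M *ᵥ v) from rfl, euclid_norm_eq,
    euclid_norm_eq] at h
  have h2 := pow_le_pow_left₀ (Real.sqrt_nonneg _) h 2
  rw [Real.sq_sqrt (by positivity), mul_pow, Real.sq_sqrt (by positivity)] at h2
  exact h2

lemma opNorm_eq_l2 (M : Matrix (Fin k) (Fin k) ℝ) : opNorm M = ‖M‖ :=
  (Matrix.cstar_norm_def M).symm

lemma opNorm_one_le : opNorm (1 : Matrix (Fin k) (Fin k) ℝ) ≤ 1 := by
  rw [opNorm, _root_.map_one, ContinuousLinearMap.one_def]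
  exact ContinuousLinearMap.norm_id_le

lemma opNorm_transpose (M : Matrix (Fin k) (Fin k) ℝ) : opNorm Mᵀ = opNorm M := by
  rw [opNorm_eq_l2, opNorm_eq_l2, ← Matrix.conjTranspose_eq_transpose_of_trivial,
    Matrix.l2_opNorm_conjTranspose]

lemma frobNorm_mul_le_op (N P : Matrix (Fin k) (Fin k) ℝ) :
    frobNorm (N * P) ≤ frobNorm N * opNorm P := by
  have hrow : ∀ i, ∑ j, (N * P) i j ^ 2 ≤ opNorm P ^ 2 * ∑ j, N i j ^ 2 := by
    intro i
    have he : ∀ j, (N * P) i j = (Pᵀ *ᵥ fun l => N i l) j := by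
      intro j
      simp [Matrix.mul_apply, Matrix.mulVec, dotProduct, Matrix.transpose_apply,
        mul_comm]
    calc ∑ j, (N * P) i j ^ 2 = ∑ j, (Pᵀ *ᵥ fun l => N i l) j ^ 2 := by
          refine Finset.sum_congr rfl fun j _ => ?_; rw [he]
      _ ≤ opNorm Pᵀ ^ 2 * ∑ j, N i j ^ 2 := sum_sq_mulVec_le _ _
      _ = opNorm P ^ 2 * ∑ j, N i j ^ 2 := by rw [opNorm_transpose]
  have hsum : ∑ i, ∑ j, (N * P) i j ^ 2 ≤ opNorm P ^ 2 * ∑ i, ∑ j, N i j ^ 2 := by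
    rw [Finset.mul_sum]
    exact Finset.sum_le_sum fun i _ => hrow i
  rw [frobNorm, frobNorm]
  calc Real.sqrt (∑ i, ∑ j, (N * P) i j ^ 2)
      ≤ Real.sqrt (opNorm P ^ 2 * ∑ i, ∑ j, N i j ^ 2) := Real.sqrt_le_sqrt hsum
    _ = opNorm P * Real.sqrt (∑ i, ∑ j, N i j ^ 2) := by
        rw [Real.sqrt_mul (sq_nonneg _), Real.sqrt_sq (opNorm_nonneg _)]
    _ = Real.sqrt (∑ i, ∑ j, N i j ^ 2) * opNorm P := mul_comm _ _

lemma frobSq_eq_trace (A : Matrix (Fin k) (Fin k) ℝ) :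
    ∑ i, ∑ j, A i j ^ 2 = Matrix.trace (Aᵀ * A) := by
  rw [Matrix.trace]
  simp only [Matrix.diag, Matrix.mul_apply, Matrix.transpose_apply]
  rw [Finset.sum_comm]
  refine Finset.sum_congr rfl fun i _ => Finset.sum_congr rfl fun j _ => (sq _)

lemma frobNorm_conj (Q M : Matrix (Fin k) (Fin k) ℝ)
    (h1 : star Q * Q = 1) (h2 : Q * star Q = 1) :
    frobNorm (Q * M * star Q) = frobNorm M := by
  have hT : star Q = Qᵀ := by
    rw [Matrix.star_eq_conjTranspose, Matrix.conjTranspose_eq_transpose_of_trivial]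
  have h1' : Qᵀ * Q = 1 := by rw [← hT]; exact h1
  have h2' : Q * Qᵀ = 1 := by rw [← hT]; exact h2
  rw [frobNorm, frobNorm, frobSq_eq_trace, frobSq_eq_trace, hT]
  have hkey : (Q * M * Qᵀ)ᵀ * (Q * M * Qᵀ) = Q * (Mᵀ * M) * Qᵀ := by
    rw [Matrix.transpose_mul, Matrix.transpose_mul, Matrix.transpose_transpose]
    calc Qᵀᵀ * (Mᵀ * Qᵀ) * (Q * M * Qᵀ) = Q * (Mᵀ * ((Qᵀ * Q) * (M * Qᵀ))) := by
          rw [Matrix.transpose_transpose]; simp only [Matrix.mul_assoc]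
      _ = Q * (Mᵀ * M) * Qᵀ := by rw [h1', one_mul]; simp only [Matrix.mul_assoc]
  rw [hkey]
  rw [Matrix.trace_mul_comm]
  rw [← Matrix.mul_assoc, ← Matrix.mul_assoc, h1', one_mul]

/-- Diagonal exponential matrix. -/
noncomputable def Ediag (d : Fin k → ℝ) (u : ℝ) : Matrix (Fin k) (Fin k) ℝ :=
  Matrix.diagonal fun i => Real.exp (-(u * d i ^ 2))

lemma Ediag_mul (d : Fin k → ℝ) (a b : ℝ) : Ediag d a * Ediag d b = Ediag d (a + b) := by
  rw [Ediag, Ediag, Ediag, Matrix.diagonal_mul_diagonal]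
  refine congrArg Matrix.diagonal (funext fun i => ?_)
  rw [← Real.exp_add]
  congr 1
  ring

lemma exp_pair_bound (a b x y : ℝ) (ha : 0 ≤ a) (hb : 0 ≤ b) (hab : a + b = 1 / 2)
    (hx : 0 ≤ x) (hy : 0 ≤ y) :
    Real.exp (-(a * x)) * Real.exp (-(b * y))
      ≤ Real.exp (-(1 / 2 * x)) + Real.exp (-(1 / 2 * y)) := by
  rw [← Real.exp_add]
  rcases le_total x y with hxy | hxy
  · have hle : Real.exp (-(a * x) + -(b * y)) ≤ Real.exp (-(1 / 2 * x)) :=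
      Real.exp_le_exp.2 (by nlinarith)
    linarith [Real.exp_pos (-(1 / 2 * y))]
  · have hle : Real.exp (-(a * x) + -(b * y)) ≤ Real.exp (-(1 / 2 * y)) :=
      Real.exp_le_exp.2 (by nlinarith)
    linarith [Real.exp_pos (-(1 / 2 * x))]

/-- diagonal rearrangement inequality. -/
lemma diag_sandwich (d : Fin k → ℝ) (G : Matrix (Fin k) (Fin k) ℝ) (a b : ℝ)
    (ha : 0 ≤ a) (hb : 0 ≤ b) (hab : a + b = 1 / 2) :
    frobNorm (Ediag d a * G * Ediag d b)
      ≤ frobNorm (G * Ediag d (1 / 2)) + frobNorm (Ediag d (1 / 2) * G) := by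
  simp only [Ediag]
  rw [frobNorm_eq_prod_sum, frobNorm_eq_prod_sum, frobNorm_eq_prod_sum]
  apply sqrt_sum_sq_le
  intro p
  obtain ⟨i, j⟩ := p
  have hA : (Matrix.diagonal (fun i => Real.exp (-(a * d i ^ 2))) * G *
      Matrix.diagonal (fun i => Real.exp (-(b * d i ^ 2)))) i j
      = Real.exp (-(a * d i ^ 2)) * G i j * Real.exp (-(b * d j ^ 2)) := by
    rw [Matrix.mul_diagonal, Matrix.diagonal_mul]
  have hB : (G * Matrix.diagonal (fun i => Real.exp (-(1 / 2 * d i ^ 2)))) i j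
      = G i j * Real.exp (-(1 / 2 * d j ^ 2)) := Matrix.mul_diagonal _ _ _ _
  have hC : (Matrix.diagonal (fun i => Real.exp (-(1 / 2 * d i ^ 2))) * G) i j
      = Real.exp (-(1 / 2 * d i ^ 2)) * G i j := Matrix.diagonal_mul _ _ _ _
  rw [hA, hB, hC]
  have hbd := exp_pair_bound a b (d i ^ 2) (d j ^ 2) ha hb hab (sq_nonneg _) (sq_nonneg _)
  have e1 : |Real.exp (-(a * d i ^ 2)) * G i j * Real.exp (-(b * d j ^ 2))|
      = Real.exp (-(a * d i ^ 2)) * Real.exp (-(b * d j ^ 2)) * |G i j| := by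
    rw [abs_mul, abs_mul, abs_of_pos (Real.exp_pos _), abs_of_pos (Real.exp_pos _)]
    ring
  have e2 : |G i j * Real.exp (-(1 / 2 * d j ^ 2))|
      = Real.exp (-(1 / 2 * d j ^ 2)) * |G i j| := by
    rw [abs_mul, abs_of_pos (Real.exp_pos _)]; ring
  have e3 : |Real.exp (-(1 / 2 * d i ^ 2)) * G i j|
      = Real.exp (-(1 / 2 * d i ^ 2)) * |G i j| := by
    rw [abs_mul, abs_of_pos (Real.exp_pos _)]
  rw [e1, e2, e3, ← add_mul]
  have := abs_nonneg (G i j)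
  nlinarith

end TraceAux

open scoped Matrix.Norms.L2Operator

open TraceAux in
/-- Trace bound for `e^{-u₁X²}H₁e^{-u₂X²}H₂e^{-u₃X²}H₃` when `u₁+u₂+u₃=1`,
`u₁,u₃ ≤ 1/2`. -/
theorem trace_three_factor_bound {k : ℕ} (X : Matrix (Fin k) (Fin k) ℝ) (hX : X.IsSymm)
    (H₁ H₂ H₃ : Matrix (Fin k) (Fin k) ℝ) (u₁ u₂ u₃ : ℝ)
    (h₁ : 0 ≤ u₁) (h₂ : 0 ≤ u₂) (h₃ : 0 ≤ u₃) (hsum : u₁ + u₂ + u₃ = 1)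
    (hu₁ : u₁ ≤ 1 / 2) (hu₃ : u₃ ≤ 1 / 2) :
    |Matrix.trace (mexp ((-u₁) • (X * X)) * H₁ * mexp ((-u₂) • (X * X)) * H₂ *
        mexp ((-u₃) • (X * X)) * H₃)| ≤
      (frobNorm (H₁ * mexp ((-(1 / 2) : ℝ) • (X * X))) +
          frobNorm (mexp ((-(1 / 2) : ℝ) • (X * X)) * H₁)) *
        (frobNorm (H₂ * mexp ((-(1 / 2) : ℝ) • (X * X))) +
          frobNorm (mexp ((-(1 / 2) : ℝ) • (X * X)) * H₂)) * opNorm H₃ := by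
  have hA : X.IsHermitian := by
    rw [Matrix.IsHermitian, Matrix.conjTranspose_eq_transpose_of_trivial]; exact hX
  set Q : Matrix (Fin k) (Fin k) ℝ := (Matrix.IsHermitian.eigenvectorUnitary hA :
    Matrix (Fin k) (Fin k) ℝ) with hQdef
  set d : Fin k → ℝ := hA.eigenvalues with hddef
  have hmem := (Matrix.IsHermitian.eigenvectorUnitary hA).2
  have h1 : star Q * Q = 1 := Matrix.mem_unitaryGroup_iff'.1 hmem
  have h2 : Q * star Q = 1 := Matrix.mem_unitaryGroup_iff.1 hmem
  have hcan1 : ∀ M : Matrix (Fin k) (Fin k) ℝ, star Q * (Q * M) = M := by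
    intro M; rw [← Matrix.mul_assoc, h1, Matrix.one_mul]
  have hcan2 : ∀ M : Matrix (Fin k) (Fin k) ℝ, Q * (star Q * M) = M := by
    intro M; rw [← Matrix.mul_assoc, h2, Matrix.one_mul]
  have hspec : X = Q * Matrix.diagonal d * star Q := by
    have := hA.spectral_theorem
    simpa using this
  set E : ℝ → Matrix (Fin k) (Fin k) ℝ := Ediag d with hEdef
  -- exponential conversion
  have hmexp : ∀ u : ℝ, mexp ((-u) • (X * X)) = Q * E u * star Q := by
    intro u
    have hdd : Matrix.diagonal d * Matrix.diagonal d
        = Matrix.diagonal fun i => d i ^ 2 := by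
      rw [Matrix.diagonal_mul_diagonal]
      exact congrArg Matrix.diagonal (funext fun i => (sq (d i)).symm)
    have hXX : X * X = Q * Matrix.diagonal (fun i => d i ^ 2) * star Q := by
      rw [hspec]
      calc Q * Matrix.diagonal d * star Q * (Q * Matrix.diagonal d * star Q)
          = Q * (Matrix.diagonal d * (star Q * (Q * (Matrix.diagonal d * star Q)))) := by
            simp only [Matrix.mul_assoc]
        _ = Q * (Matrix.diagonal d * (Matrix.diagonal d * star Q)) := by rw [hcan1]
        _ = Q * (Matrix.diagonal d * Matrix.diagonal d) * star Q := by
            simp only [Matrix.mul_assoc]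
        _ = Q * Matrix.diagonal (fun i => d i ^ 2) * star Q := by rw [hdd]
    have hsmul : (-u) • (X * X) = Q * Matrix.diagonal (fun i => -(u * d i ^ 2)) * star Q := by
      have hds : (-u) • Matrix.diagonal (fun i => d i ^ 2)
          = Matrix.diagonal (fun i => -(u * d i ^ 2)) := by
        rw [← Matrix.diagonal_smul]
        exact congrArg Matrix.diagonal
          (funext fun i => by simp [Pi.smul_apply, smul_eq_mul, neg_mul])
      rw [hXX, ← smul_mul_assoc, ← mul_smul_comm, hds]
    rw [hsmul, mexp]
    have hQinv : Q⁻¹ = star Q := Matrix.inv_eq_right_inv h2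
    have hunit : IsUnit Q := ⟨⟨Q, star Q, h2, h1⟩, rfl⟩
    rw [← hQinv, Matrix.exp_conj _ _ hunit, Matrix.exp_diagonal, hQinv,
      hEdef, Ediag, Pi.exp_def]
    simp only [Real.exp_eq_exp_ℝ]
  set G₁ := star Q * H₁ * Q with hG₁
  set G₂ := star Q * H₂ * Q with hG₂
  set G₃ := star Q * H₃ * Q with hG₃
  -- trace identity
  have hid : mexp ((-u₁) • (X * X)) * H₁ * mexp ((-u₂) • (X * X)) * H₂ *
        mexp ((-u₃) • (X * X)) * H₃
      = Q * (E u₁ * G₁ * E u₂ * G₂ * E u₃ * G₃) * star Q := by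
    rw [hmexp u₁, hmexp u₂, hmexp u₃, hG₁, hG₂, hG₃]
    simp only [Matrix.mul_assoc, hcan1, hcan2, h2, Matrix.mul_one]
  have htrace : Matrix.trace (mexp ((-u₁) • (X * X)) * H₁ * mexp ((-u₂) • (X * X)) * H₂ *
        mexp ((-u₃) • (X * X)) * H₃)
      = Matrix.trace (E u₁ * G₁ * E u₂ * G₂ * E u₃ * G₃) := by
    rw [hid, Matrix.trace_mul_comm, ← Matrix.mul_assoc, h1, Matrix.one_mul]
  -- Frobenius norm identities
  have hfrobR : ∀ H : Matrix (Fin k) (Fin k) ℝ,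
      frobNorm (H * mexp ((-(1 / 2) : ℝ) • (X * X)))
        = frobNorm ((star Q * H * Q) * E (1 / 2)) := by
    intro H
    have : H * mexp ((-(1 / 2) : ℝ) • (X * X)) = Q * ((star Q * H * Q) * E (1 / 2)) * star Q := by
      rw [hmexp (1 / 2)]
      simp only [Matrix.mul_assoc, hcan1, hcan2, h2, Matrix.mul_one]
    rw [this, frobNorm_conj _ _ h1 h2]
  have hfrobL : ∀ H : Matrix (Fin k) (Fin k) ℝ,
      frobNorm (mexp ((-(1 / 2) : ℝ) • (X * X)) * H)
        = frobNorm (E (1 / 2) * (star Q * H * Q)) := by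
    intro H
    have : mexp ((-(1 / 2) : ℝ) • (X * X)) * H = Q * (E (1 / 2) * (star Q * H * Q)) * star Q := by
      rw [hmexp (1 / 2)]
      simp only [Matrix.mul_assoc, hcan1, hcan2, h2, Matrix.mul_one]
    rw [this, frobNorm_conj _ _ h1 h2]
  -- operator norm bound
  have hop : opNorm G₃ ≤ opNorm H₃ := by
    have hQnorm : ‖Q‖ ≤ 1 := by
      have hcs : ‖Qᴴ * Q‖ = ‖Q‖ * ‖Q‖ := Matrix.l2_opNorm_conjTranspose_mul_self Q
      rw [← Matrix.star_eq_conjTranspose, h1] at hcs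
      have hone : ‖(1 : Matrix (Fin k) (Fin k) ℝ)‖ ≤ 1 := by
        rw [← opNorm_eq_l2]; exact opNorm_one_le
      nlinarith [norm_nonneg Q]
    have hQsnorm : ‖star Q‖ ≤ 1 := by
      rw [Matrix.star_eq_conjTranspose, Matrix.l2_opNorm_conjTranspose]
      exact hQnorm
    rw [hG₃, opNorm_eq_l2, opNorm_eq_l2]
    calc ‖star Q * H₃ * Q‖ ≤ ‖star Q * H₃‖ * ‖Q‖ := Matrix.l2_opNorm_mul _ _
      _ ≤ ‖star Q‖ * ‖H₃‖ * ‖Q‖ :=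
          mul_le_mul_of_nonneg_right (Matrix.l2_opNorm_mul _ _) (norm_nonneg _)
      _ ≤ 1 * ‖H₃‖ * 1 := by
          apply mul_le_mul
          · exact mul_le_mul_of_nonneg_right hQsnorm (norm_nonneg _)
          · exact hQnorm
          · exact norm_nonneg _
          · exact mul_nonneg (by linarith [norm_nonneg (star Q)] : (0:ℝ) ≤ 1) (norm_nonneg H₃)
      _ = ‖H₃‖ := by ring
  -- split the middle exponent
  set α : ℝ := 1 / 2 - u₁ with hα
  set β : ℝ := 1 / 2 - u₃ with hβ
  have hα0 : 0 ≤ α := by rw [hα]; linarith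
  have hβ0 : 0 ≤ β := by rw [hβ]; linarith
  have hE2 : E u₂ = E α * E β := by
    have hab : α + β = u₂ := by rw [hα, hβ]; linarith
    rw [hEdef, Ediag_mul, hab]
  set M := E u₁ * G₁ * E α with hM
  set N := E β * G₂ * E u₃ with hN
  have hZ : E u₁ * G₁ * E u₂ * G₂ * E u₃ * G₃ = M * (N * G₃) := by
    rw [hE2, hM, hN]
    simp only [Matrix.mul_assoc]
  -- bounds on the two Frobenius factors
  have hMbound : frobNorm M ≤ frobNorm (G₁ * E (1 / 2)) + frobNorm (E (1 / 2) * G₁) := by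
    rw [hM, hEdef]
    exact diag_sandwich d G₁ u₁ α h₁ hα0 (by rw [hα]; ring)
  have hNbound : frobNorm N ≤ frobNorm (G₂ * E (1 / 2)) + frobNorm (E (1 / 2) * G₂) := by
    rw [hN, hEdef]
    exact diag_sandwich d G₂ β u₃ hβ0 h₃ (by rw [hβ]; ring)
  -- assemble
  rw [htrace, hZ, hfrobR H₁, hfrobL H₁, hfrobR H₂, hfrobL H₂, ← hG₁, ← hG₂]
  calc |Matrix.trace (M * (N * G₃))|
      ≤ frobNorm M * frobNorm (N * G₃) := abs_trace_mul_le _ _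
    _ ≤ frobNorm M * (frobNorm N * opNorm G₃) :=
        mul_le_mul_of_nonneg_left (frobNorm_mul_le_op _ _) (frobNorm_nonneg _)
    _ ≤ (frobNorm (G₁ * E (1 / 2)) + frobNorm (E (1 / 2) * G₁)) *
          ((frobNorm (G₂ * E (1 / 2)) + frobNorm (E (1 / 2) * G₂)) * opNorm H₃) := by
        apply mul_le_mul hMbound
        · apply mul_le_mul hNbound hop (opNorm_nonneg _)
            (add_nonneg (frobNorm_nonneg _) (frobNorm_nonneg _))
        · exact mul_nonneg (frobNorm_nonneg _) (opNorm_nonneg _)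
        · exact add_nonneg (frobNorm_nonneg _) (frobNorm_nonneg _)
    _ = (frobNorm (G₁ * E (1 / 2)) + frobNorm (E (1 / 2) * G₁)) *
          (frobNorm (G₂ * E (1 / 2)) + frobNorm (E (1 / 2) * G₂)) * opNorm H₃ := by ring
end

section
/- Let f : ℝ → ℝ be f(x) = e^x. For any X ∈ Sym_k(ℝ) and A ∈ M_k(ℝ), the Fréchet derivative of the matrix exponential at X in direction A is given by Df(X)[A] = ∫₀¹ e^{(1-u)X} A e^{uX} du (Dyson's expansion). -/
open Matrix

section DysonAux
open NormedSpace
variable {k : ℕ}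

theorem dyson_aux_deriv (B X : Matrix (Fin k) (Fin k) ℝ) (u : ℝ) (i j : Fin k) :
    HasDerivAt (fun u : ℝ => (exp ((1 - u) • B) * exp (u • X)) i j)
      ((exp ((1 - u) • B) * (X - B) * exp (u • X)) i j) u := by
  letI : SeminormedRing (Matrix (Fin k) (Fin k) ℝ) := Matrix.linftyOpSemiNormedRing
  letI : NormedRing (Matrix (Fin k) (Fin k) ℝ) := Matrix.linftyOpNormedRing
  letI : NormedAlgebra ℝ (Matrix (Fin k) (Fin k) ℝ) := Matrix.linftyOpNormedAlgebra
  have hs : HasDerivAt (fun u : ℝ => 1 - u) (-1) u := by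
    simpa using (hasDerivAt_id u).const_sub 1
  have h1 : HasDerivAt (fun u : ℝ => exp ((1 - u) • B)) (-(B * exp ((1 - u) • B))) u := by
    have := (hasDerivAt_exp_smul_const' (𝕂 := ℝ) B (1 - u)).scomp u hs
    rw [neg_one_smul] at this
    exact this
  have h2 : HasDerivAt (fun u : ℝ => exp (u • X)) (X * exp (u • X)) u :=
    hasDerivAt_exp_smul_const' X u
  have h3 := h1.mul h2
  have h4 := (Matrix.entryLinearMap ℝ ℝ i j).toContinuousLinearMap.hasFDerivAt.comp_hasDerivAt u h3
  have hcomm : B * exp ((1 - u) • B) = exp ((1 - u) • B) * B :=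
    (((Commute.refl B).smul_right (1 - u)).exp_right).eq
  have heq : exp ((1 - u) • B) * (X - B) * exp (u • X) =
      -(B * exp ((1 - u) • B)) * exp (u • X) +
        exp ((1 - u) • B) * (X * exp (u • X)) := by
    rw [hcomm]; noncomm_ring
  rw [show ((exp ((1 - u) • B) * (X - B) * exp (u • X)) i j) =
      (-(B * exp ((1 - u) • B)) * exp (u • X) +
        exp ((1 - u) • B) * (X * exp (u • X))) i j from congrArg (fun M => M i j) heq]
  exact h4

theorem dyson_aux_cont (X A : Matrix (Fin k) (Fin k) ℝ) (i j : Fin k) :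
    Continuous (fun p : ℝ × ℝ =>
      (exp ((1 - p.2) • (X + p.1 • A)) * A * exp (p.2 • X)) i j) := by
  letI : SeminormedRing (Matrix (Fin k) (Fin k) ℝ) := Matrix.linftyOpSemiNormedRing
  letI : NormedRing (Matrix (Fin k) (Fin k) ℝ) := Matrix.linftyOpNormedRing
  letI : NormedAlgebra ℝ (Matrix (Fin k) (Fin k) ℝ) := Matrix.linftyOpNormedAlgebra
  have hexp : Continuous (exp : Matrix (Fin k) (Fin k) ℝ → Matrix (Fin k) (Fin k) ℝ) :=
    continuous_iff_continuousAt.2 fun x => (exp_analytic (𝕂 := ℝ) x).continuousAt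
  have h1 : Continuous fun p : ℝ × ℝ => (1 - p.2) • (X + p.1 • A) :=
    (continuous_const.sub continuous_snd).smul
      (continuous_const.add (continuous_fst.smul continuous_const))
  have h2 : Continuous fun p : ℝ × ℝ => (p.2 : ℝ) • X := continuous_snd.smul continuous_const
  have h3 : Continuous fun p : ℝ × ℝ =>
      exp ((1 - p.2) • (X + p.1 • A)) * A * exp (p.2 • X) :=
    ((hexp.comp h1).mul continuous_const).mul (hexp.comp h2)
  exact ((Matrix.entryLinearMap ℝ ℝ i j).toContinuousLinearMap.continuous).comp h3

end DysonAux

attribute [local instance] Matrix.normedAddCommGroup Matrix.normedSpace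

/-- Dyson's expansion: the Fréchet derivative of the matrix exponential at a symmetric
`X` in direction `A` is `∫₀¹ e^{(1-u)X} A e^{uX} du`. -/
theorem dyson_expansion {k : ℕ} (X A : Matrix (Fin k) (Fin k) ℝ) (hX : X.IsSymm) :
    deriv (fun t : ℝ => mexp (X + t • A)) 0 =
      ∫ u in (0 : ℝ)..1, mexp ((1 - u) • X) * A * mexp (u • X) := by
  classical
  set H : ℝ → ℝ → Matrix (Fin k) (Fin k) ℝ := fun t u =>
    NormedSpace.exp ((1 - u) • (X + t • A)) * A * NormedSpace.exp (u • X) with hH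
  have Hcont : Continuous (Function.uncurry H) := by
    apply continuous_pi; intro i; apply continuous_pi; intro j
    simp only [hH, Function.uncurry]
    exact dyson_aux_cont X A i j
  set φ : ℝ → Matrix (Fin k) (Fin k) ℝ := fun t => ∫ u in (0:ℝ)..1, H t u with hφ
  have φcont : Continuous φ :=
    intervalIntegral.continuous_parametric_intervalIntegral_of_continuous' Hcont 0 1
  have key : ∀ t : ℝ, mexp (X + t • A) - mexp X = t • φ t := by
    intro t
    set B := X + t • A with hB
    have hderiv : ∀ u ∈ Set.uIcc (0:ℝ) 1,
        HasDerivAt (fun u : ℝ => NormedSpace.exp ((1 - u) • B) * NormedSpace.exp (u • X))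
          ((-t) • H t u) u := by
      intro u _
      have h : HasDerivAt
          (fun u : ℝ => NormedSpace.exp ((1 - u) • B) * NormedSpace.exp (u • X))
          (NormedSpace.exp ((1 - u) • B) * (X - B) * NormedSpace.exp (u • X)) u :=
        hasDerivAt_pi.2 fun i => hasDerivAt_pi.2 fun j => dyson_aux_deriv B X u i j
      have hXB : X - B = (-t) • A := by rw [hB, sub_add_cancel_left, neg_smul]
      have hval : NormedSpace.exp ((1 - u) • B) * (X - B) * NormedSpace.exp (u • X)
          = (-t) • H t u := by
        rw [hXB, hH]
        simp [Matrix.mul_smul, Matrix.smul_mul, ← hB]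
      exact hval ▸ h
    have hint : @IntervalIntegrable (Matrix (Fin k) (Fin k) ℝ) _ NormedAddGroup.toENormedAddMonoid (fun u => (-t) • H t u) MeasureTheory.volume 0 1 := by
      apply Continuous.intervalIntegrable
      exact (Hcont.comp (continuous_const.prodMk continuous_id)).const_smul (-t)
    have ftc := intervalIntegral.integral_eq_sub_of_hasDerivAt hderiv hint
    rw [intervalIntegral.integral_smul] at ftc
    have h1 : NormedSpace.exp ((1 - (1:ℝ)) • B) * NormedSpace.exp ((1:ℝ) • X)
        = NormedSpace.exp X := by
      simp [NormedSpace.exp_zero]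
    have h0 : NormedSpace.exp ((1 - (0:ℝ)) • B) * NormedSpace.exp ((0:ℝ) • X)
        = NormedSpace.exp B := by
      simp [NormedSpace.exp_zero]
    rw [h1, h0] at ftc
    have : t • φ t = -((-t) • (∫ u in (0:ℝ)..1, H t u)) := by
      rw [hφ]; simp [neg_smul]
    rw [this, ftc, mexp, mexp, hB]
    abel
  have hslope : Filter.Tendsto (slope (fun t : ℝ => mexp (X + t • A)) 0)
      (nhdsWithin 0 {x | x ≠ 0}) (nhds (φ 0)) := by
    have h1 : Filter.Tendsto φ (nhdsWithin 0 {x | x ≠ 0}) (nhds (φ 0)) :=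
      (φcont.tendsto 0).mono_left nhdsWithin_le_nhds
    apply h1.congr'
    filter_upwards [self_mem_nhdsWithin] with t ht
    have hne : (t : ℝ) ≠ 0 := ht
    have hf0 : mexp (X + (0:ℝ) • A) = mexp X := by rw [zero_smul, add_zero]
    rw [slope_def_module]
    simp only [hf0, sub_zero]
    rw [key t, smul_smul, inv_mul_cancel₀ hne, one_smul]
  have hd : HasDerivAt (fun t : ℝ => mexp (X + t • A)) (φ 0) 0 :=
    hasDerivAt_iff_tendsto_slope.2 hslope
  erw [hd.deriv]
  have hX0 : X + (0:ℝ) • A = X := by rw [zero_smul, add_zero]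
  simp only [hφ, hH, hX0, mexp]
end

section
/- Let f : ℝ → ℝ be twice differentiable and X = diag(x₁,...,x_k) a real diagonal matrix. For any k×k matrix A, the first-order Fréchet derivative of the matrix function f at X satisfies (Df(X)[A])_{i,j} = f^{[1]}(x_i, x_j)·A_{i,j}, where f^{[1]} is the first divided difference, f^{[1]}(a,b) = (f(a)-f(b))/(a-b) for a ≠ b and f^{[1]}(a,a) = f'(a). -/
open Matrix

section DKAux

open Polynomial Finset

/-- The geometric-type sum appearing in the derivative of matrix powers. -/
noncomputable def dkS (n : ℕ) (a b : ℝ) : ℝ := ∑ m ∈ Finset.range n, a ^ m * b ^ (n - 1 - m)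

lemma dkS_succ (n : ℕ) (a b : ℝ) : dkS (n + 1) a b = dkS n a b * b + a ^ n := by
  unfold dkS
  rw [Finset.sum_range_succ]
  simp only [Nat.add_sub_cancel, Nat.sub_self, pow_zero, mul_one]
  congr 1
  rw [Finset.sum_mul]
  refine Finset.sum_congr rfl fun m hm => ?_
  rw [Finset.mem_range] at hm
  rw [mul_assoc, ← pow_succ]
  congr 2
  omega

lemma dkS_self (n : ℕ) (a : ℝ) : dkS n a a = n * a ^ (n - 1) := by
  unfold dkS
  rw [Finset.sum_congr rfl fun m hm => ?_]
  · rw [Finset.sum_const, Finset.card_range, nsmul_eq_mul]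
  · rw [Finset.mem_range] at hm
    rw [← pow_add]
    congr 1
    omega

lemma deriv_polyeval (p : ℝ[X]) (a : ℝ) :
    deriv (fun y => p.eval y) a
      = ∑ n ∈ range (p.natDegree + 1), p.coeff n * (n * a ^ (n - 1)) := by
  have h : (fun y => p.eval y) = fun y => ∑ n ∈ range (p.natDegree + 1), p.coeff n * y ^ n := by
    funext y; exact p.eval_eq_sum_range y
  rw [h]
  have : HasDerivAt (fun y : ℝ => ∑ n ∈ range (p.natDegree + 1), p.coeff n * y ^ n)
      (∑ n ∈ range (p.natDegree + 1), p.coeff n * (n * a ^ (n - 1))) a := by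
    apply HasDerivAt.fun_sum
    intro n _
    exact (hasDerivAt_pow n a).const_mul (p.coeff n)
  exact this.deriv

/-- Hermite interpolation: there is a polynomial matching the values and first derivatives of
`f` at the finitely many points `x i`. -/
lemma hermite_interp_exists {k : ℕ} (f : ℝ → ℝ) (x : Fin k → ℝ) :
    ∃ p : ℝ[X], (∀ i, p.eval (x i) = f (x i)) ∧
      (∀ i, p.derivative.eval (x i) = deriv f (x i)) := by
  classical
  set s : Finset ℝ := Finset.univ.image x with hs
  have hvs : Set.InjOn id (↑s : Set ℝ) := Function.injective_id.injOn
  set q : ℝ[X] := Lagrange.nodal s id with hq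
  set L1 : ℝ[X] := Lagrange.interpolate s id f with hL1
  have hqzero : ∀ a ∈ s, q.eval a = 0 := by
    intro a ha
    rw [hq, Lagrange.eval_nodal]
    exact Finset.prod_eq_zero ha (sub_self a)
  have hq' : ∀ a ∈ s, q.derivative.eval a ≠ 0 := by
    intro a ha
    rw [hq]
    have := Lagrange.eval_nodal_derivative_eval_node_eq (v := id) (s := s) ha
    simp only [id] at this
    rw [this, Lagrange.eval_nodal]
    refine Finset.prod_ne_zero_iff.2 fun b hb => ?_
    have : b ≠ a := Finset.ne_of_mem_erase hb
    exact sub_ne_zero.2 (fun h => this h.symm)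
  set g : ℝ → ℝ := fun a => (deriv f a - L1.derivative.eval a) / q.derivative.eval a with hg
  set L2 : ℝ[X] := Lagrange.interpolate s id g with hL2
  refine ⟨L1 + q * L2, ?_, ?_⟩
  · intro i
    have hxi : x i ∈ s := Finset.mem_image_of_mem x (Finset.mem_univ i)
    rw [eval_add, eval_mul, hqzero _ hxi, zero_mul, add_zero, hL1]
    exact Lagrange.eval_interpolate_at_node f hvs hxi
  · intro i
    have hxi : x i ∈ s := Finset.mem_image_of_mem x (Finset.mem_univ i)
    rw [derivative_add, derivative_mul, eval_add, eval_add, eval_mul, eval_mul,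
      hqzero _ hxi, zero_mul, add_zero]
    have h2 : L2.eval (x i) = g (x i) := Lagrange.eval_interpolate_at_node g hvs hxi
    rw [h2, hg]
    field_simp [hq' _ hxi]
    ring

/-- Entrywise derivative of matrix powers at a diagonal point. -/
lemma hasDerivAt_pow_entry {k : ℕ} (x : Fin k → ℝ) (A : Matrix (Fin k) (Fin k) ℝ)
    (n : ℕ) (i j : Fin k) :
    HasDerivAt (fun t : ℝ => ((Matrix.diagonal x + t • A) ^ n) i j)
      (dkS n (x i) (x j) * A i j) 0 := by
  induction n generalizing i j with
  | zero =>
    simp only [pow_zero, dkS, Finset.range_zero, Finset.sum_empty, zero_mul]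
    exact hasDerivAt_const 0 _
  | succ n ih =>
    have key : ∀ t : ℝ, ((Matrix.diagonal x + t • A) ^ (n + 1)) i j
        = ∑ w, ((Matrix.diagonal x + t • A) ^ n) i w
            * (Matrix.diagonal x w j + t * A w j) := by
      intro t
      rw [pow_succ, Matrix.mul_apply]
      exact Finset.sum_congr rfl fun w _ => by simp [Matrix.add_apply, Matrix.smul_apply]
    have hsum : HasDerivAt
        (fun t : ℝ => ∑ w, ((Matrix.diagonal x + t • A) ^ n) i w
            * (Matrix.diagonal x w j + t * A w j))
        (∑ w, (dkS n (x i) (x w) * A i w * (Matrix.diagonal x w j + 0 * A w j)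
          + ((Matrix.diagonal x + (0:ℝ) • A) ^ n) i w * A w j)) 0 := by
      apply HasDerivAt.fun_sum
      intro w _
      have h2 : HasDerivAt (fun t : ℝ => Matrix.diagonal x w j + t * A w j) (A w j) 0 := by
        simpa using ((hasDerivAt_id (0:ℝ)).mul_const (A w j)).const_add (Matrix.diagonal x w j)
      exact (ih i w).mul h2
    rw [funext key]
    convert hsum using 1
    simp only [zero_mul, add_zero, zero_smul, Matrix.diagonal_pow, Matrix.diagonal_apply,
      Pi.pow_apply]
    rw [Finset.sum_add_distrib]
    have e1 : ∑ w, dkS n (x i) (x w) * A i w * (if w = j then x w else 0)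
        = dkS n (x i) (x j) * A i j * x j := by
      rw [Finset.sum_eq_single j]
      · simp
      · intro w _ hw; simp [hw]
      · intro h; exact absurd (Finset.mem_univ j) h
    have e2 : ∑ w, (if i = w then x i ^ n else 0) * A w j = x i ^ n * A i j := by
      rw [Finset.sum_eq_single i]
      · simp
      · intro w _ hw; simp [Ne.symm hw]
      · intro h; exact absurd (Finset.mem_univ i) h
    rw [e1, e2, dkS_succ]
    ring

/-- Spectral perturbation: eigenvalues of `diagonal x + B` are close to the `x i`. -/
lemma dk_spectrum_perturb {k : ℕ} (x : Fin k → ℝ) (B : Matrix (Fin k) (Fin k) ℝ) (c : ℝ)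
    (hB : ∀ i, ∑ j, |B i j| ≤ c) (μ : ℝ)
    (hμ : μ ∈ spectrum ℝ (Matrix.diagonal x + B)) : ∃ i, |μ - x i| ≤ c := by
  classical
  by_contra hcon
  push_neg at hcon
  rcases isEmpty_or_nonempty (Fin k) with hk | hk
  · rw [spectrum.mem_iff] at hμ
    exact hμ (isUnit_of_subsingleton _)
  have hc0 : 0 ≤ c := le_trans (Finset.sum_nonneg fun j _ => abs_nonneg _) (hB hk.some)
  have hne : ∀ i, μ - x i ≠ 0 := fun i => by
    have := hcon i; intro h; rw [h, abs_zero] at this; linarith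
  rw [spectrum.mem_iff] at hμ
  apply hμ
  set Dμ : Matrix (Fin k) (Fin k) ℝ := Matrix.diagonal (fun i => μ - x i) with hDμ
  set E : Matrix (Fin k) (Fin k) ℝ := Matrix.diagonal (fun i => (μ - x i)⁻¹) with hE
  have hDE : Dμ * E = 1 := by
    rw [hDμ, hE, Matrix.diagonal_mul_diagonal]
    ext i j
    rcases eq_or_ne i j with rfl | h
    · simp [Matrix.diagonal_apply_eq, Matrix.one_apply_eq, mul_inv_cancel₀ (hne i)]
    · simp [Matrix.diagonal_apply_ne _ h, Matrix.one_apply_ne h]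
  have hED : E * Dμ = 1 := by
    rw [hDμ, hE, Matrix.diagonal_mul_diagonal]
    ext i j
    rcases eq_or_ne i j with rfl | h
    · simp [Matrix.diagonal_apply_eq, Matrix.one_apply_eq, inv_mul_cancel₀ (hne i)]
    · simp [Matrix.diagonal_apply_ne _ h, Matrix.one_apply_ne h]
  have heq : (algebraMap ℝ (Matrix (Fin k) (Fin k) ℝ)) μ - (Matrix.diagonal x + B)
      = Dμ * (1 - E * B) := by
    rw [mul_sub, mul_one, ← mul_assoc, hDE, one_mul, hDμ]
    rw [Matrix.algebraMap_eq_diagonal]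
    rw [sub_add_eq_sub_sub]
    congr 1
    rw [← Matrix.diagonal_sub]
    congr 1
  rw [heq]
  letI : NormedRing (Matrix (Fin k) (Fin k) ℝ) := Matrix.linftyOpNormedRing
  letI : NormedAlgebra ℝ (Matrix (Fin k) (Fin k) ℝ) := Matrix.linftyOpNormedAlgebra
  letI : CompleteSpace (Matrix (Fin k) (Fin k) ℝ) := FiniteDimensional.complete ℝ _
  have hnorm : ‖E * B‖ < 1 := by
    rw [Matrix.linfty_opNorm_def]
    rw [show (1:ℝ) = ((1:NNReal):ℝ) from rfl, NNReal.coe_lt_coe]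
    rw [Finset.sup_lt_iff (show ⊥ < (1:NNReal) from zero_lt_one)]
    intro i _
    rw [← NNReal.coe_lt_coe]
    push_cast
    have hpos : 0 < |μ - x i| := lt_of_le_of_lt hc0 (hcon i)
    have hent : ∀ j, ‖(E * B) i j‖ = |μ - x i|⁻¹ * |B i j| := by
      intro j
      rw [hE, Matrix.diagonal_mul]
      rw [Real.norm_eq_abs, abs_mul, abs_inv]
    calc ∑ j, ‖(E * B) i j‖ = |μ - x i|⁻¹ * ∑ j, |B i j| := by
            rw [Finset.mul_sum]; exact Finset.sum_congr rfl fun j _ => hent j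
      _ ≤ |μ - x i|⁻¹ * c := by
            apply mul_le_mul_of_nonneg_left (hB i) (inv_nonneg.2 hpos.le)
      _ = c / |μ - x i| := by rw [div_eq_inv_mul]
      _ < 1 := (div_lt_one hpos).2 (hcon i)
  exact (IsUnit.mul ⟨⟨Dμ, E, hDE, hED⟩, rfl⟩ (Units.oneSub _ hnorm).isUnit)

/-- Entrywise bound for the functional calculus of a Hermitian matrix in terms of a
bound of the function on the spectrum. -/
lemma dk_cfc_entry_bound {k : ℕ} (r : ℝ → ℝ) (M : Matrix (Fin k) (Fin k) ℝ)
    (hM : M.IsHermitian) (c : ℝ) (hc : ∀ μ ∈ spectrum ℝ M, |r μ| ≤ c) (i j : Fin k) :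
    |cfc r M i j| ≤ k * c := by
  rw [hM.cfc_eq r]
  unfold Matrix.IsHermitian.cfc
  set U : Matrix (Fin k) (Fin k) ℝ :=
    (Matrix.IsHermitian.eigenvectorUnitary hM : Matrix (Fin k) (Fin k) ℝ) with hU
  have hUU : U * star U = 1 := Unitary.mul_star_self_of_mem (SetLike.coe_mem _)
  have hUbd : ∀ a b : Fin k, |U a b| ≤ 1 := by
    intro a b
    have h1 : ∑ l, U a l * U a l = 1 := by
      have := congrFun (congrFun hUU a) a
      rw [Matrix.mul_apply] at this
      simpa [Matrix.star_apply, Matrix.one_apply] using this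
    have h2 : U a b * U a b ≤ 1 := by
      rw [← h1]
      exact Finset.single_le_sum (f := fun l => U a l * U a l)
        (fun l _ => mul_self_nonneg _) (Finset.mem_univ b)
    nlinarith [abs_nonneg (U a b), sq_abs (U a b)]
  have hentry : (U * Matrix.diagonal ((RCLike.ofReal : ℝ → ℝ) ∘ r ∘ hM.eigenvalues) * star U) i j
      = ∑ l, U i l * r (hM.eigenvalues l) * U j l := by
    rw [Matrix.mul_apply]
    refine Finset.sum_congr rfl fun l _ => ?_
    rw [Matrix.mul_apply]
    rw [Finset.sum_eq_single l]
    · simp [Matrix.diagonal_apply_eq, Matrix.star_apply]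
    · intro w _ hw; simp [Matrix.diagonal_apply_ne _ hw]
    · intro h; exact absurd (Finset.mem_univ l) h
  change |(U * Matrix.diagonal ((RCLike.ofReal : ℝ → ℝ) ∘ r ∘ hM.eigenvalues) * star U) i j| ≤ k * c
  rw [hentry]
  calc |∑ l, U i l * r (hM.eigenvalues l) * U j l|
      ≤ ∑ l, |U i l * r (hM.eigenvalues l) * U j l| := Finset.abs_sum_le_sum_abs _ _
    _ ≤ ∑ _l : Fin k, c := by
        refine Finset.sum_le_sum fun l _ => ?_
        rw [abs_mul, abs_mul]
        have h1 := hUbd i l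
        have h2 := hUbd j l
        have h3 := hc _ (hM.eigenvalues_mem_spectrum_real l)
        have h5 := abs_nonneg (r (hM.eigenvalues l))
        have h6 := abs_nonneg (U j l)
        calc |U i l| * |r (hM.eigenvalues l)| * |U j l|
            ≤ 1 * |r (hM.eigenvalues l)| * 1 :=
              mul_le_mul (mul_le_mul h1 le_rfl h5 zero_le_one) h2 h6 (by positivity)
          _ = |r (hM.eigenvalues l)| := by ring
          _ ≤ c := h3
    _ = k * c := by rw [Finset.sum_const, Finset.card_univ, Fintype.card_fin, nsmul_eq_mul]

end DKAux

attribute [local instance] Matrix.normedAddCommGroup Matrix.normedSpace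

/-- First divided difference: `f^{[1]}(a,b) = (f(a)-f(b))/(a-b)` for `a ≠ b`,
and `f^{[1]}(a,a) = f'(a)`. -/
noncomputable def divDiff1 (f : ℝ → ℝ) (a b : ℝ) : ℝ :=
  if a = b then deriv f a else (f a - f b) / (a - b)

section DKAux2

open Polynomial Finset

lemma dk_sum_coeff (p : ℝ[X]) (a b : ℝ) :
    ∑ n ∈ range (p.natDegree + 1), p.coeff n * dkS n a b = divDiff1 (fun y => p.eval y) a b := by
  rcases eq_or_ne a b with rfl | hab
  · rw [divDiff1, if_pos rfl, deriv_polyeval]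
    exact Finset.sum_congr rfl fun n _ => by rw [dkS_self]
  · rw [divDiff1, if_neg hab]
    have hab' : a - b ≠ 0 := sub_ne_zero.2 hab
    rw [eq_div_iff hab', Finset.sum_mul]
    have : ∀ n ∈ range (p.natDegree + 1),
        p.coeff n * dkS n a b * (a - b) = p.coeff n * a ^ n - p.coeff n * b ^ n := by
      intro n _
      rw [mul_assoc, dkS, geom_sum₂_mul, mul_sub]
    rw [Finset.sum_congr rfl this, Finset.sum_sub_distrib,
      ← Polynomial.eval_eq_sum_range, ← Polynomial.eval_eq_sum_range]

/-- Entrywise derivative of `t ↦ aeval (diagonal x + t • A) p` at `t = 0`. -/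
lemma hasDerivAt_aeval_entry {k : ℕ} (x : Fin k → ℝ) (A : Matrix (Fin k) (Fin k) ℝ)
    (p : ℝ[X]) (i j : Fin k) :
    HasDerivAt (fun t : ℝ => (aeval (Matrix.diagonal x + t • A) p) i j)
      (divDiff1 (fun y => p.eval y) (x i) (x j) * A i j) 0 := by
  have key : ∀ t : ℝ, (aeval (Matrix.diagonal x + t • A) p) i j
      = ∑ n ∈ range (p.natDegree + 1), p.coeff n * (((Matrix.diagonal x + t • A) ^ n) i j) := by
    intro t
    rw [Polynomial.aeval_eq_sum_range]
    rw [Matrix.sum_apply]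
    exact Finset.sum_congr rfl fun n _ => by simp [Matrix.smul_apply]
  rw [funext key]
  have := HasDerivAt.fun_sum (fun n (_ : n ∈ range (p.natDegree + 1)) =>
    (hasDerivAt_pow_entry x A n i j).const_mul (p.coeff n))
  refine this.congr_deriv ?_
  rw [← dk_sum_coeff, Finset.sum_mul]
  exact Finset.sum_congr rfl fun n _ => by ring

lemma dk_selfadjoint {k : ℕ} (x : Fin k → ℝ) (A : Matrix (Fin k) (Fin k) ℝ)
    (hA : A.IsSymm) (t : ℝ) : _root_.IsSelfAdjoint (Matrix.diagonal x + t • A) := by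
  have h1 : _root_.IsSelfAdjoint A := by
    rw [_root_.IsSelfAdjoint, Matrix.star_eq_conjTranspose,
      Matrix.conjTranspose_eq_transpose_of_trivial]
    exact hA
  exact ((Matrix.isHermitian_diagonal x).isSelfAdjoint).add
    (IsSelfAdjoint.smul (star_trivial t) h1)

/-- The remainder term (vanishing to second order at every `x i`) has zero derivative. -/
lemma dk_remainder {k : ℕ} (x : Fin k → ℝ) (A : Matrix (Fin k) (Fin k) ℝ) (hA : A.IsSymm)
    (r : ℝ → ℝ) (hrd : Differentiable ℝ r) (hrc : Continuous (deriv r))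
    (hr0 : ∀ i, r (x i) = 0) (hr1 : ∀ i, deriv r (x i) = 0) :
    HasDerivAt (fun t : ℝ => cfc r (Matrix.diagonal x + t • A)) 0 0 := by
  rcases isEmpty_or_nonempty (Fin k) with hk | hk
  · have : (fun t : ℝ => cfc r (Matrix.diagonal x + t • A))
        = fun _ => (0 : Matrix (Fin k) (Fin k) ℝ) := by
      funext t; ext i j; exact isEmptyElim i
    rw [this]; exact hasDerivAt_const 0 _
  have value0 : cfc r (Matrix.diagonal x) = 0 := by
    have heq : (spectrum ℝ (Matrix.diagonal x)).EqOn r 0 := by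
      rw [spectrum_diagonal]
      rintro _ ⟨i, rfl⟩
      exact hr0 i
    rw [cfc_congr heq, cfc_zero]
  refine hasDerivAt_iff_isLittleO.2 ?_
  have hfun : ∀ t : ℝ, cfc r (Matrix.diagonal x + t • A) - cfc r (Matrix.diagonal x + (0:ℝ) • A)
      - (t - 0) • (0 : Matrix (Fin k) (Fin k) ℝ) = cfc r (Matrix.diagonal x + t • A) := by
    intro t
    rw [smul_zero, sub_zero, zero_smul, add_zero, value0, sub_zero]
  refine Asymptotics.IsLittleO.congr' (Asymptotics.isLittleO_iff.2 ?_)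
    (Filter.Eventually.of_forall fun t => (hfun t).symm) (by rfl)
  intro ε hε
  set a : ℝ := Finset.univ.sup' (Finset.univ_nonempty) (fun i => ∑ j, |A i j|) with ha_def
  have ha : ∀ i, ∑ j, |A i j| ≤ a :=
    fun i => Finset.le_sup' (fun i => ∑ j, |A i j|) (Finset.mem_univ i)
  have ha0 : 0 ≤ a := le_trans (Finset.sum_nonneg fun j _ => abs_nonneg _) (ha hk.some)
  set ε' : ℝ := ε / (k * a + 1) with hε'_def
  have hden : (0:ℝ) < k * a + 1 := by positivity
  have hε' : 0 < ε' := div_pos hε hden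
  have hδ : ∀ i : Fin k, ∃ δ > 0, ∀ s : ℝ, dist s (x i) < δ → |deriv r s| < ε' := by
    intro i
    have := Metric.continuousAt_iff.1 (hrc.continuousAt (x := x i)) ε' hε'
    obtain ⟨δ, hδpos, hδ⟩ := this
    exact ⟨δ, hδpos, fun s hs => by simpa [Real.dist_eq, hr1 i] using hδ hs⟩
  choose δ hδpos hδsmall using hδ
  set δ0 : ℝ := Finset.univ.inf' (Finset.univ_nonempty) δ with hδ0_def
  have hδ0pos : 0 < δ0 := (Finset.lt_inf'_iff _).2 fun i _ => hδpos i
  have hδ0le : ∀ i, δ0 ≤ δ i := fun i => Finset.inf'_le _ (Finset.mem_univ i)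
  rw [Metric.eventually_nhds_iff]
  refine ⟨δ0 / (a + 1), by positivity, ?_⟩
  intro t ht
  simp only [dist_zero_right, Real.norm_eq_abs] at ht
  have hta : |t| * a < δ0 := by
    calc |t| * a ≤ (δ0 / (a + 1)) * a := by
          rcases eq_or_lt_of_le ha0 with h | h
          · rw [← h]; simp
          · exact mul_le_mul_of_nonneg_right ht.le ha0
      _ < δ0 := by
          rw [div_mul_eq_mul_div, div_lt_iff₀ (by positivity)]
          nlinarith
  have hspec : ∀ μ ∈ spectrum ℝ (Matrix.diagonal x + t • A), |r μ| ≤ ε' * (|t| * a) := by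
    intro μ hμ
    obtain ⟨i, hi⟩ := dk_spectrum_perturb x (t • A) (|t| * a)
      (fun i => by
        calc ∑ j, |(t • A) i j| = |t| * ∑ j, |A i j| := by
              rw [Finset.mul_sum]
              exact Finset.sum_congr rfl fun j _ => by
                rw [Matrix.smul_apply, smul_eq_mul, abs_mul]
          _ ≤ |t| * a := mul_le_mul_of_nonneg_left (ha i) (abs_nonneg t)) μ hμ
    have hμball : μ ∈ Metric.ball (x i) (δ i) := by
      rw [Metric.mem_ball, Real.dist_eq]
      exact lt_of_le_of_lt hi (lt_of_lt_of_le hta (hδ0le i))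
    have hxball : x i ∈ Metric.ball (x i) (δ i) := Metric.mem_ball_self (hδpos i)
    have hmvt := Convex.norm_image_sub_le_of_norm_deriv_le
      (f := r) (s := Metric.ball (x i) (δ i))
      (fun y _ => hrd y) (fun y hy => by
        rw [Real.norm_eq_abs]
        exact (hδsmall i y (by rwa [Metric.mem_ball] at hy)).le)
      (convex_ball _ _) hxball hμball
    rw [hr0 i, sub_zero, Real.norm_eq_abs, Real.norm_eq_abs] at hmvt
    calc |r μ| ≤ ε' * |μ - x i| := hmvt
      _ ≤ ε' * (|t| * a) := mul_le_mul_of_nonneg_left hi hε'.le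
  have hsa : (Matrix.diagonal x + t • A).IsHermitian := dk_selfadjoint x A hA t
  have hbd : ∀ i j, |cfc r (Matrix.diagonal x + t • A) i j| ≤ k * (ε' * (|t| * a)) :=
    dk_cfc_entry_bound r _ hsa _ hspec
  have hnb : ‖cfc r (Matrix.diagonal x + t • A)‖ ≤ k * (ε' * (|t| * a)) := by
    rw [Matrix.norm_le_iff (by positivity)]
    intro i j
    rw [Real.norm_eq_abs]
    exact hbd i j
  calc ‖cfc r (Matrix.diagonal x + t • A)‖ ≤ k * (ε' * (|t| * a)) := hnb
    _ = (k * a * ε') * |t| := by ring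
    _ ≤ ε * |t| := by
        apply mul_le_mul_of_nonneg_right _ (abs_nonneg t)
        rw [hε'_def, mul_comm ((k:ℝ) * a), div_mul_eq_mul_div, div_le_iff₀ hden]
        nlinarith [hε.le, mul_nonneg (Nat.cast_nonneg k : (0:ℝ) ≤ k) ha0]
    _ = ε * ‖t - 0‖ := by rw [sub_zero, Real.norm_eq_abs]

end DKAux2

open Polynomial Finset

/-- Daleckii–Krein formula at a diagonal point: for twice differentiable `f` and
`X = diag(x₁,…,x_k)`, the Fréchet derivative of the matrix function `M ↦ f(M)`
(given by the continuous functional calculus, extended linearly to arbitrary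
directions) satisfies `(Df(X)[A])_{ij} = f^{[1]}(xᵢ,xⱼ)·A_{ij}` for every matrix `A`. -/
theorem daleckii_krein_diagonal {k : ℕ} (f : ℝ → ℝ)
    (hf : ∀ x : ℝ, DifferentiableAt ℝ f x ∧ DifferentiableAt ℝ (deriv f) x)
    (x : Fin k → ℝ) :
    ∃ D : Matrix (Fin k) (Fin k) ℝ →ₗ[ℝ] Matrix (Fin k) (Fin k) ℝ,
      (∀ A : Matrix (Fin k) (Fin k) ℝ, A.IsSymm →
        HasDerivAt (fun t : ℝ => cfc f (Matrix.diagonal x + t • A)) (D A) 0) ∧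
      ∀ (A : Matrix (Fin k) (Fin k) ℝ) (i j : Fin k),
        D A i j = divDiff1 f (x i) (x j) * A i j := by
  classical
  set Dmap : Matrix (Fin k) (Fin k) ℝ →ₗ[ℝ] Matrix (Fin k) (Fin k) ℝ :=
    { toFun := fun A => Matrix.of fun i j => divDiff1 f (x i) (x j) * A i j
      map_add' := by
        intro A B
        ext i j
        simp [Matrix.add_apply, mul_add]
      map_smul' := by
        intro c A
        ext i j
        simp [Matrix.smul_apply, smul_eq_mul]
        ring } with hDmap
  refine ⟨Dmap, ?_, fun A i j => rfl⟩
  intro A hA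
  obtain ⟨p, hp0, hp1⟩ := hermite_interp_exists f x
  set r : ℝ → ℝ := fun y => f y - p.eval y with hr
  have hfd : Differentiable ℝ f := fun y => (hf y).1
  have hfd' : Differentiable ℝ (deriv f) := fun y => (hf y).2
  have hpd : Differentiable ℝ (fun y : ℝ => p.eval y) := p.differentiable
  have hrd : Differentiable ℝ r := hfd.sub hpd
  have hderiv_r : deriv r = fun y => deriv f y - p.derivative.eval y := by
    funext y
    rw [hr]
    rw [deriv_fun_sub (hfd y) (hpd y), Polynomial.deriv]
  have hrc : Continuous (deriv r) := by
    rw [hderiv_r]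
    exact (hfd'.continuous).sub p.derivative.continuous
  have hr0 : ∀ i, r (x i) = 0 := fun i => by rw [hr]; simp [hp0 i]
  have hr1 : ∀ i, deriv r (x i) = 0 := fun i => by
    rw [hderiv_r]; simp [hp1 i]
  -- splitting of cfc
  have hsplit : (fun t : ℝ => cfc f (Matrix.diagonal x + t • A))
      = fun t : ℝ => aeval (Matrix.diagonal x + t • A) p
          + cfc r (Matrix.diagonal x + t • A) := by
    funext t
    have hsa := dk_selfadjoint x A hA t
    have hfr : (fun y => p.eval y + r y) = f := funext fun y => by rw [hr]; ring
    rw [← hfr]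
    rw [cfc_add (a := Matrix.diagonal x + t • A) (fun y => p.eval y) r
      ((p.continuous_aeval).continuousOn) ((hrd.continuous).continuousOn)]
    rw [cfc_polynomial p _ hsa]
  rw [hsplit]
  -- divided differences of p agree with those of f at the nodes
  have hdd : ∀ i j, divDiff1 (fun y => p.eval y) (x i) (x j) = divDiff1 f (x i) (x j) := by
    intro i j
    rw [divDiff1, divDiff1]
    split_ifs with h
    · rw [Polynomial.deriv]
      exact hp1 i
    · rw [hp0 i, hp0 j]
  have h1 : HasDerivAt (fun t : ℝ => aeval (Matrix.diagonal x + t • A) p) (Dmap A) 0 := by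
    apply hasDerivAt_pi.2
    intro i
    apply hasDerivAt_pi.2
    intro j
    have := hasDerivAt_aeval_entry x A p i j
    rw [hdd i j] at this
    exact this
  have h2 : HasDerivAt (fun t : ℝ => cfc r (Matrix.diagonal x + t • A)) 0 0 :=
    dk_remainder x A hA r hrd hrc hr0 hr1
  have h3 := h1.add h2
  rw [add_zero] at h3
  exact h3
end
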